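/- Let ∇h ∈ ℝ^{n×m} and ∇g ∈ ℝ^{n×p} be real matrices such that the columns of the concatenated matrix [∇h, ∇g] are linearly independent, let H ∈ ℝ^{m×m} be a diagonal matrix, and define R := I − ∇g(∇gᵀ∇g)⁻¹∇gᵀ, P := ∇hᵀR∇h + H², and Q := R − R∇h P⁻¹ ∇hᵀ R. Then for every F ∈ ℝ^n, λ ∈ ℝ^m, and ν ∈ ℝ^p, with k := (∇gᵀ∇g)⁻¹∇gᵀ(F + ∇hλ), the following identity holds: ‖F + ∇hλ + ∇gν‖₂² + ‖Hλ‖₂² = (ν + k)ᵀ(∇gᵀ∇g)(ν + k) + (λ + P⁻¹∇hᵀRF)ᵀ P (λ + P⁻¹∇hᵀRF) + FᵀQF. -/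

import Mathlib

/-!
Write `u = F + ∇h λ` and let `R` be the projection onto the orthogonal complement of the column
space of `∇g`. Then `u + ∇g ν = R u + ∇g (ν + k)` is an orthogonal decomposition, which completes
the square in `ν` and leaves `uᵀ R u`. Expanding,
`uᵀ R u + ‖H λ‖² = λᵀ P λ + 2 λᵀ ∇hᵀ R F + Fᵀ R F`, and completing the square in `λ` leaves
`Fᵀ R F - (∇hᵀ R F)ᵀ P⁻¹ (∇hᵀ R F) = Fᵀ Q F`. The inverses exist because `∇gᵀ ∇g` and
`P = (R ∇h)ᵀ (R ∇h) + Hᵀ H` are positive definite: independence of the columns of `[∇h, ∇g]`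
makes `∇g` and `R ∇h` injective.
-/

open Matrix

/-- The Euclidean (ℓ²) norm of a vector in `Fin n → ℝ`. -/
noncomputable def euclNorm {n : ℕ} (v : Fin n → ℝ) : ℝ :=
  ‖(EuclideanSpace.equiv (Fin n) ℝ).symm v‖

theorem euclNorm_sq {n : ℕ} (v : Fin n → ℝ) : euclNorm v ^ 2 = v ⬝ᵥ v := by
  rw [euclNorm, ← real_inner_self_eq_norm_sq, EuclideanSpace.inner_eq_star_dotProduct]
  simp

namespace Matrix

theorem mulVec_injective_of_ker {𝕜 m n : Type*} [CommRing 𝕜] [Fintype m] {A : Matrix n m 𝕜}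
    (h : ∀ x, A *ᵥ x = 0 → x = 0) : Function.Injective A.mulVec :=
  LinearMap.ker_eq_bot.mp (ker_mulVecLin_eq_bot_iff.mpr h)

variable {𝕜 m n : Type*} [CommRing 𝕜] [Fintype m] [Fintype n]

theorem dotProduct_transpose_mul_mul_mulVec (B : Matrix n m 𝕜) (M : Matrix n n 𝕜)
    (x : m → 𝕜) : x ⬝ᵥ (Bᵀ * M * B) *ᵥ x = (B *ᵥ x) ⬝ᵥ M *ᵥ (B *ᵥ x) := by
  rw [Matrix.mul_assoc, ← mulVec_mulVec, ← mulVec_mulVec, dotProduct_transpose_mulVec,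
    dotProduct_comm]

theorem dotProduct_transpose_mul_self_mulVec (B : Matrix n m 𝕜) (x : m → 𝕜) :
    x ⬝ᵥ (Bᵀ * B) *ᵥ x = (B *ᵥ x) ⬝ᵥ (B *ᵥ x) := by
  rw [← mulVec_mulVec, dotProduct_transpose_mulVec, dotProduct_comm]

theorem IsSymm.dotProduct_add_mulVec_mulVec_add_mulVec {S : Matrix n n 𝕜} (hS : S.IsSymm)
    (B : Matrix n m 𝕜) (u : n → 𝕜) (x : m → 𝕜) :
    (u + B *ᵥ x) ⬝ᵥ S *ᵥ (u + B *ᵥ x) =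
      u ⬝ᵥ S *ᵥ u + 2 * (x ⬝ᵥ Bᵀ *ᵥ (S *ᵥ u)) + x ⬝ᵥ (Bᵀ * S * B) *ᵥ x := by
  have hcross : (B *ᵥ x) ⬝ᵥ S *ᵥ u = u ⬝ᵥ S *ᵥ (B *ᵥ x) := by
    rw [← dotProduct_transpose_mulVec, hS.eq]
  rw [mulVec_add, dotProduct_add, add_dotProduct, add_dotProduct, ← hcross,
    dotProduct_transpose_mul_mul_mulVec, dotProduct_transpose_mulVec, dotProduct_comm (S *ᵥ u)]
  ring

theorem IsSymm.dotProduct_mul_mul_transpose_mul_mulVec {S : Matrix n n 𝕜} (hS : S.IsSymm)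
    (B : Matrix n m 𝕜) (M : Matrix m m 𝕜) (x : n → 𝕜) :
    x ⬝ᵥ (S * B * M * Bᵀ * S) *ᵥ x = (Bᵀ *ᵥ (S *ᵥ x)) ⬝ᵥ M *ᵥ (Bᵀ *ᵥ (S *ᵥ x)) := by
  have h : S * B * M * Bᵀ * S = (Bᵀ * S)ᵀ * M * (Bᵀ * S) := by
    rw [transpose_mul, transpose_transpose, hS.eq, Matrix.mul_assoc _ Bᵀ]
  rw [h, dotProduct_transpose_mul_mul_mulVec, ← mulVec_mulVec]

theorem IsSymm.dotProduct_mulVec_add_two_mul_dotProduct [DecidableEq m] {S : Matrix m m 𝕜}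
    (hS : S.IsSymm) (hdet : IsUnit S.det) (x t : m → 𝕜) :
    x ⬝ᵥ S *ᵥ x + 2 * (x ⬝ᵥ t) =
      (x + S⁻¹ *ᵥ t) ⬝ᵥ S *ᵥ (x + S⁻¹ *ᵥ t) - t ⬝ᵥ S⁻¹ *ᵥ t := by
  have hSs : S *ᵥ (S⁻¹ *ᵥ t) = t := by rw [mulVec_mulVec, mul_nonsing_inv _ hdet, one_mulVec]
  have hcross : (S⁻¹ *ᵥ t) ⬝ᵥ S *ᵥ x = x ⬝ᵥ t := by
    rw [← dotProduct_transpose_mulVec, hS.eq, hSs]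
  rw [mulVec_add, hSs, dotProduct_add, add_dotProduct, add_dotProduct, hcross,
    dotProduct_comm (S⁻¹ *ᵥ t) t]
  ring

section ResidualMaker

variable [DecidableEq m] [DecidableEq n]

/-- The residual maker of least squares: when `AᵀA` is invertible, the orthogonal projection onto
the complement of the column space of `A`. -/
noncomputable def residualMaker (A : Matrix n m 𝕜) : Matrix n n 𝕜 :=
  1 - A * (Aᵀ * A)⁻¹ * Aᵀ

theorem isSymm_residualMaker (A : Matrix n m 𝕜) : (residualMaker A).IsSymm := by
  simp [IsSymm, residualMaker, transpose_nonsing_inv, Matrix.mul_assoc]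

theorem mulVec_leastSquares (A : Matrix n m 𝕜) (u : n → 𝕜) :
    A *ᵥ ((Aᵀ * A)⁻¹ *ᵥ (Aᵀ *ᵥ u)) = u - residualMaker A *ᵥ u := by
  rw [residualMaker, sub_mulVec, one_mulVec, sub_sub_cancel, mulVec_mulVec, mulVec_mulVec]

variable {A : Matrix n m 𝕜} (hA : IsUnit (Aᵀ * A).det)
include hA

theorem residualMaker_mul : residualMaker A * A = 0 := by
  rw [residualMaker, Matrix.sub_mul, Matrix.one_mul, Matrix.mul_assoc _ Aᵀ,
    Matrix.mul_assoc, nonsing_inv_mul _ hA, Matrix.mul_one, sub_self]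

theorem transpose_mul_residualMaker : Aᵀ * residualMaker A = 0 := by
  simpa [(isSymm_residualMaker A).eq] using congrArg transpose (residualMaker_mul hA)

theorem residualMaker_mul_self : residualMaker A * residualMaker A = residualMaker A := by
  nth_rewrite 2 [residualMaker]
  rw [Matrix.mul_sub, Matrix.mul_one, ← Matrix.mul_assoc, ← Matrix.mul_assoc,
    residualMaker_mul hA, Matrix.zero_mul, Matrix.zero_mul, sub_zero]

theorem transpose_residualMaker_mul_residualMaker :
    (residualMaker A)ᵀ * residualMaker A = residualMaker A := by
  rw [(isSymm_residualMaker A).eq, residualMaker_mul_self hA]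

theorem dotProduct_add_mulVec_self (u : n → 𝕜) (ν : m → 𝕜) :
    (u + A *ᵥ ν) ⬝ᵥ (u + A *ᵥ ν) =
      (ν + (Aᵀ * A)⁻¹ *ᵥ (Aᵀ *ᵥ u)) ⬝ᵥ (Aᵀ * A) *ᵥ (ν + (Aᵀ * A)⁻¹ *ᵥ (Aᵀ *ᵥ u))
        + u ⬝ᵥ residualMaker A *ᵥ u := by
  set w := ν + (Aᵀ * A)⁻¹ *ᵥ (Aᵀ *ᵥ u)
  have hsplit : u + A *ᵥ ν = residualMaker A *ᵥ u + A *ᵥ w := by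
    rw [mulVec_add, mulVec_leastSquares]
    abel
  have horth : (residualMaker A *ᵥ u) ⬝ᵥ A *ᵥ w = 0 := by
    rw [← dotProduct_transpose_mulVec, mulVec_mulVec, transpose_mul_residualMaker hA,
      zero_mulVec, dotProduct_zero]
  have hRu : u ⬝ᵥ residualMaker A *ᵥ u = (residualMaker A *ᵥ u) ⬝ᵥ (residualMaker A *ᵥ u) := by
    rw [← dotProduct_transpose_mul_self_mulVec, transpose_residualMaker_mul_residualMaker hA]
  rw [hsplit, dotProduct_transpose_mul_self_mulVec, hRu, add_dotProduct, dotProduct_add,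
    dotProduct_add, horth, dotProduct_comm (A *ᵥ w), horth]
  ring

end ResidualMaker

section Real

variable {k l m n : Type*} [Fintype k] [Fintype l] [Fintype m] [Fintype n]

theorem posDef_transpose_mul_self {A : Matrix n m ℝ} (hA : Function.Injective A.mulVec) :
    (Aᵀ * A).PosDef := by
  simpa using PosDef.conjTranspose_mul_self A hA

variable [DecidableEq m] [DecidableEq n]

theorem residualMaker_mul_mulVec_injective {A : Matrix n m ℝ} {B : Matrix n l ℝ}
    (hli : ∀ w₁ w₂, B *ᵥ w₁ + A *ᵥ w₂ = 0 → w₁ = 0 ∧ w₂ = 0) :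
    Function.Injective (residualMaker A * B).mulVec := by
  refine mulVec_injective_of_ker fun x hx => (hli x (-((Aᵀ * A)⁻¹ *ᵥ (Aᵀ *ᵥ (B *ᵥ x)))) ?_).1
  rw [← mulVec_mulVec] at hx
  rw [mulVec_neg, mulVec_leastSquares, hx, sub_zero, add_neg_cancel]

theorem posDef_transpose_mul_residualMaker_mul_add {A : Matrix n m ℝ} {B : Matrix n l ℝ}
    (hA : IsUnit (Aᵀ * A).det) (hB : Function.Injective (residualMaker A * B).mulVec)
    (C : Matrix k l ℝ) : (Bᵀ * residualMaker A * B + Cᵀ * C).PosDef := by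
  have hsq : Bᵀ * residualMaker A * B = (residualMaker A * B)ᵀ * (residualMaker A * B) := by
    simp only [transpose_mul, Matrix.mul_assoc]
    rw [← Matrix.mul_assoc (residualMaker A)ᵀ, transpose_residualMaker_mul_residualMaker hA]
  rw [hsq]
  exact (posDef_transpose_mul_self hB).add_posSemidef
    (by simpa using posSemidef_conjTranspose_mul_self C)

end Real

end Matrix

theorem stmt12 {n m p : ℕ} (gradh : Matrix (Fin n) (Fin m) ℝ)
    (gradg : Matrix (Fin n) (Fin p) ℝ)
    (H : Matrix (Fin m) (Fin m) ℝ) (hH : H.IsDiag)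
    (hli : ∀ (w₁ : Fin m → ℝ) (w₂ : Fin p → ℝ),
      gradh *ᵥ w₁ + gradg *ᵥ w₂ = 0 → w₁ = 0 ∧ w₂ = 0)
    (R : Matrix (Fin n) (Fin n) ℝ)
    (hR : R = 1 - gradg * (gradgᵀ * gradg)⁻¹ * gradgᵀ)
    (P : Matrix (Fin m) (Fin m) ℝ)
    (hP : P = gradhᵀ * R * gradh + H * H)
    (Q : Matrix (Fin n) (Fin n) ℝ)
    (hQ : Q = R - R * gradh * P⁻¹ * gradhᵀ * R)
    (F : Fin n → ℝ) (lam : Fin m → ℝ) (ν : Fin p → ℝ)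
    (k : Fin p → ℝ) (hk : k = (gradgᵀ * gradg)⁻¹ *ᵥ (gradgᵀ *ᵥ (F + gradh *ᵥ lam))) :
    euclNorm (F + gradh *ᵥ lam + gradg *ᵥ ν) ^ 2 + euclNorm (H *ᵥ lam) ^ 2 =
      (ν + k) ⬝ᵥ (gradgᵀ * gradg) *ᵥ (ν + k)
        + (lam + P⁻¹ *ᵥ (gradhᵀ *ᵥ (R *ᵥ F))) ⬝ᵥ P *ᵥ (lam + P⁻¹ *ᵥ (gradhᵀ *ᵥ (R *ᵥ F)))
        + F ⬝ᵥ Q *ᵥ F := by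
  change R = residualMaker gradg at hR
  have hG : IsUnit (gradgᵀ * gradg).det :=
    (isUnit_iff_isUnit_det _).mp (posDef_transpose_mul_self (mulVec_injective_of_ker
      fun w hw => (hli 0 w (by rw [mulVec_zero, zero_add, hw])).2)).isUnit
  have hHH : H * H = Hᵀ * H := by rw [hH.isSymm.eq]
  have hPpos : P.PosDef := by
    rw [hP, hR, hHH]
    exact posDef_transpose_mul_residualMaker_mul_add hG
      (residualMaker_mul_mulVec_injective hli) H
  have hRsymm : R.IsSymm := hR ▸ isSymm_residualMaker gradg
  have hPsymm : P.IsSymm := hPpos.isHermitian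
  have hmid : (F + gradh *ᵥ lam) ⬝ᵥ R *ᵥ (F + gradh *ᵥ lam) + (H *ᵥ lam) ⬝ᵥ (H *ᵥ lam) =
      lam ⬝ᵥ P *ᵥ lam + 2 * (lam ⬝ᵥ gradhᵀ *ᵥ (R *ᵥ F)) + F ⬝ᵥ R *ᵥ F := by
    rw [hRsymm.dotProduct_add_mulVec_mulVec_add_mulVec, hP, hHH, add_mulVec, dotProduct_add,
      dotProduct_transpose_mul_self_mulVec]
    ring
  rw [euclNorm_sq, euclNorm_sq, hk, hR, dotProduct_add_mulVec_self hG, ← hR, add_assoc, hmid,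
    hPsymm.dotProduct_mulVec_add_two_mul_dotProduct (isUnit_iff_isUnit_det _ |>.mp hPpos.isUnit),
    hQ, sub_mulVec, dotProduct_sub, hRsymm.dotProduct_mul_mul_transpose_mul_mulVec]
  ring
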